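/- Let $n \ge 2$ and let $u \in H^1(\mathbb{R}^n)$ be radially symmetric. Then for every $R > 0$ there is a constant $C = C(n)$ (independent of $u$ and $R$) such that $\|u\|_{L^\infty(|x| \ge R)} \le C\, R^{-(n-1)/2}\, \|\nabla u\|_{L^2(\mathbb{R}^n)}^{1/2}\, \|u\|_{L^2(\mathbb{R}^n)}^{1/2}$. -/

import Mathlib

/-!
Write the radial function as `u x = g ‖x‖`. Polar coordinates turn the `L²` norms of `u` and of
its derivative into the square root of the sphere area times the `L²(r ^ (n - 1) dr)` norms of
`g` and `g'` on `(0, ∞)`; here one uses that `‖Du‖` is itself radial, since the reflection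
exchanging two points of equal norm leaves `u` invariant.

In one variable, `(r ^ k ‖g r‖²)' ≥ -2 r ^ k ‖g r‖ ‖g' r‖` for `r ≥ 0`, and `r ^ k ‖g r‖²` is
integrable, so it is arbitrarily small at some `T ≥ ρ`. Integrating from `ρ` to `T` and applying
Cauchy–Schwarz gives `ρ ^ k ‖g ρ‖² ≤ 2 ‖g‖₂ ‖g'‖₂`.
-/

open Set MeasureTheory
open scoped ENNReal

local notation "dim" => Module.finrank ℝ

noncomputable def radialMeasure (k : ℕ) : Measure ℝ :=
  (volume.restrict (Ioi 0)).withDensity fun r => ENNReal.ofReal (r ^ k)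

theorem map_subtype_val_volumeIoiPow (k : ℕ) :
    (Measure.volumeIoiPow k).map Subtype.val = radialMeasure k := by
  ext s hs
  rw [Measure.map_apply measurable_subtype_coe hs, Measure.volumeIoiPow,
    withDensity_apply _ (measurable_subtype_coe hs), radialMeasure, withDensity_apply _ hs,
    Measure.restrict_restrict hs,
    setLIntegral_subtype measurableSet_Ioi _ fun r => ENNReal.ofReal (r ^ k),
    Subtype.image_preimage_coe, inter_comm]

section RadialMeasure

variable {G : Type*} [NormedAddCommGroup G] [NormedSpace ℝ G] (k : ℕ)

theorem integrable_radialMeasure_iff {h : ℝ → G} :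
    Integrable h (radialMeasure k) ↔ IntegrableOn (fun r => r ^ k • h r) (Ioi 0) := by
  refine (integrable_withDensity_iff_integrable_smul
    (f := fun r : ℝ => (r ^ k).toNNReal) (by fun_prop)).trans ?_
  refine integrableOn_congr_fun (fun r hr => ?_) measurableSet_Ioi
  rw [NNReal.smul_def, Real.coe_toNNReal _ (pow_nonneg (le_of_lt hr) k)]

theorem integral_radialMeasure (h : ℝ → G) :
    ∫ r, h r ∂radialMeasure k = ∫ r in Ioi 0, r ^ k • h r := by
  refine (integral_withDensity_eq_integral_smul
    (f := fun r : ℝ => (r ^ k).toNNReal) (by fun_prop) h).trans ?_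
  refine setIntegral_congr_fun measurableSet_Ioi fun r hr => ?_
  rw [NNReal.smul_def, Real.coe_toNNReal _ (pow_nonneg (le_of_lt hr) k)]

end RadialMeasure

section Polar

variable {E : Type*} [NormedAddCommGroup E] [NormedSpace ℝ E] [FiniteDimensional ℝ E]
  [Nontrivial E] [MeasurableSpace E] [BorelSpace E] (μ : Measure E) [μ.IsAddHaarMeasure]

theorem toReal_toSphere_univ_pos : 0 < (μ.toSphere univ).toReal :=
  ENNReal.toReal_pos (Measure.measure_univ_ne_zero.2 μ.toSphere_ne_zero) (measure_ne_top _ _)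

theorem map_norm_addHaar : μ.map norm = μ.toSphere univ • radialMeasure (dim E - 1) := by
  have hsnd : (norm ∘ Subtype.val : ({(0 : E)}ᶜ : Set E) → ℝ) =
      (Subtype.val ∘ Prod.snd) ∘ homeomorphUnitSphereProd E := by
    funext x; simp
  calc μ.map norm = ((μ.comap Subtype.val).map Subtype.val).map norm := by
        rw [map_comap_subtype_coe (measurableSet_singleton 0).compl, restrict_compl_singleton]
    _ = ((μ.comap Subtype.val).map (homeomorphUnitSphereProd E)).map
          (Subtype.val ∘ Prod.snd) := by
        rw [Measure.map_map measurable_norm measurable_subtype_coe,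
          Measure.map_map (by fun_prop) (homeomorphUnitSphereProd E).measurable, hsnd]
    _ = ((μ.toSphere.prod (Measure.volumeIoiPow (dim E - 1))).map Prod.snd).map
          Subtype.val := by
        rw [μ.measurePreserving_homeomorphUnitSphereProd.map_eq,
          Measure.map_map measurable_subtype_coe measurable_snd]
    _ = μ.toSphere univ • radialMeasure (dim E - 1) := by
        rw [Measure.map_snd_prod, Measure.map_smul, map_subtype_val_volumeIoiPow]

theorem eLpNorm_comp_norm_addHaar {F : Type*} [NormedAddCommGroup F] {f : ℝ → F}
    (hf : AEStronglyMeasurable f (radialMeasure (dim E - 1))) {p : ℝ≥0∞} (hp : p ≠ ∞) :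
    eLpNorm (fun x => f ‖x‖) p μ =
      μ.toSphere univ ^ (1 / p).toReal * eLpNorm f p (radialMeasure (dim E - 1)) := by
  rw [← smul_eq_mul, ← eLpNorm_smul_measure_of_ne_top hp, ← map_norm_addHaar,
    eLpNorm_map_measure _ measurable_norm.aemeasurable]
  · rfl
  · rw [map_norm_addHaar]
    exact hf.smul_measure _

end Polar

theorem exists_lt_of_integrableOn_Ioi {f : ℝ → ℝ} {a ε : ℝ} (hf : IntegrableOn f (Ioi a))
    (hε : 0 < ε) : ∃ T > a, f T < ε := by
  by_contra! h
  have hconst : IntegrableOn (fun _ => ε) (Ioi a) :=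
    hf.mono' aestronglyMeasurable_const <| ae_restrict_of_forall_mem measurableSet_Ioi
      fun T hT => (Real.norm_of_nonneg hε.le).trans_le (h T hT)
  simp [integrableOn_const_iff, hε.ne'] at hconst

theorem integral_norm_mul_norm_le {α E : Type*} [MeasurableSpace α] {μ : Measure α}
    [NormedAddCommGroup E] {f g : α → E} (hf : MemLp f 2 μ) (hg : MemLp g 2 μ) :
    ∫ a, ‖f a‖ * ‖g a‖ ∂μ ≤ (eLpNorm f 2 μ).toReal * (eLpNorm g 2 μ).toReal := by
  have h2 : ENNReal.ofReal 2 = 2 := by norm_num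
  have := integral_mul_norm_le_Lp_mul_Lq Real.HolderConjugate.two_two (h2 ▸ hf) (h2 ▸ hg)
  rw [hf.eLpNorm_eq_integral_rpow_norm two_ne_zero ENNReal.ofNat_ne_top,
    hg.eLpNorm_eq_integral_rpow_norm two_ne_zero ENNReal.ofNat_ne_top,
    ENNReal.toReal_ofReal (by positivity), ENNReal.toReal_ofReal (by positivity)]
  simpa [one_div] using this

theorem le_mul_rpow_half_mul_rpow_half_of_sq_le {t M a b : ℝ≥0∞}
    (h : t ^ 2 ≤ M ^ 2 * a * b) : t ≤ M * a ^ (1 / 2 : ℝ) * b ^ (1 / 2 : ℝ) := by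
  have hsq : ∀ y : ℝ≥0∞, (y ^ (1 / 2 : ℝ)) ^ 2 = y := fun y => by
    simpa using ENNReal.rpow_inv_natCast_pow two_ne_zero y
  rwa [← ENNReal.pow_le_pow_left_iff two_ne_zero, mul_pow, mul_pow, hsq, hsq]

theorem rpow_neg_half_sq_mul_pow {R : ℝ} (hR : 0 < R) (k : ℕ) :
    (R ^ (-((k : ℝ) / 2))) ^ 2 * R ^ k = 1 := by
  rw [← Real.rpow_natCast, ← Real.rpow_mul hR.le, ← Real.rpow_natCast, ← Real.rpow_add hR]
  norm_num

section OneDim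

variable {F : Type*} [NormedAddCommGroup F] [InnerProductSpace ℝ F]

theorem pow_mul_sq_norm_le_add_integral {g : ℝ → F} (hg : Differentiable ℝ g) (k : ℕ)
    {ρ T : ℝ} (hρ : 0 ≤ ρ) (hρT : ρ ≤ T)
    (hint : IntegrableOn (fun r => r ^ k * (‖g r‖ * ‖deriv g r‖)) (Icc ρ T)) :
    ρ ^ k * ‖g ρ‖ ^ 2 ≤
      T ^ k * ‖g T‖ ^ 2 + ∫ r in ρ..T, 2 * (r ^ k * (‖g r‖ * ‖deriv g r‖)) := by
  have hderiv : ∀ r, HasDerivAt (fun r => -(r ^ k * ‖g r‖ ^ 2))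
      (-(k * r ^ (k - 1) * ‖g r‖ ^ 2 + r ^ k * (2 * inner ℝ (g r) (deriv g r)))) r :=
    fun r => ((hasDerivAt_pow k r).mul (hg r).hasDerivAt.norm_sq).neg
  have := intervalIntegral.sub_le_integral_of_hasDeriv_right_of_le hρT
    (fun r _ => (hderiv r).continuousAt.continuousWithinAt)
    (fun r _ => (hderiv r).hasDerivWithinAt) (hint.const_mul 2) (fun r hr => ?_)
  · linarith
  have hr : 0 ≤ r := hρ.trans hr.1.le
  have hinner : -(‖g r‖ * ‖deriv g r‖) ≤ inner ℝ (g r) (deriv g r) :=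
    neg_le_of_abs_le (abs_real_inner_le_norm _ _)
  have : 0 ≤ k * r ^ (k - 1) * ‖g r‖ ^ 2 := by positivity
  nlinarith [mul_le_mul_of_nonneg_left hinner (pow_nonneg hr k)]

theorem pow_mul_sq_norm_le {g : ℝ → F} (hg : Differentiable ℝ g) {k : ℕ}
    (hg2 : MemLp g 2 (radialMeasure k)) (hg'2 : MemLp (deriv g) 2 (radialMeasure k))
    {ρ : ℝ} (hρ : 0 < ρ) :
    ρ ^ k * ‖g ρ‖ ^ 2 ≤ 2 * (eLpNorm g 2 (radialMeasure k)).toReal *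
      (eLpNorm (deriv g) 2 (radialMeasure k)).toReal := by
  set G := fun r => r ^ k * (‖g r‖ * ‖deriv g r‖)
  have hG : IntegrableOn G (Ioi 0) :=
    (integrable_radialMeasure_iff k).1 (hg2.norm.integrable_mul hg'2.norm)
  have hG_le : ∫ r in Ioi 0, G r ≤
      (eLpNorm g 2 (radialMeasure k)).toReal * (eLpNorm (deriv g) 2 (radialMeasure k)).toReal := by
    simpa only [integral_radialMeasure, smul_eq_mul] using integral_norm_mul_norm_le hg2 hg'2
  have hF : IntegrableOn (fun r => r ^ k * ‖g r‖ ^ 2) (Ioi ρ) :=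
    ((integrable_radialMeasure_iff k).1 (hg2.integrable_norm_pow two_ne_zero)).mono_set
      (Ioi_subset_Ioi hρ.le)
  refine le_of_forall_pos_le_add fun ε hε => ?_
  obtain ⟨T, hρT, hT⟩ := exists_lt_of_integrableOn_Ioi hF hε
  have hGT : ∫ r in ρ..T, G r ≤ ∫ r in Ioi 0, G r := by
    rw [intervalIntegral.integral_of_le hρT.le]
    exact setIntegral_mono_set hG (ae_restrict_of_forall_mem measurableSet_Ioi fun r hr =>
      mul_nonneg (pow_nonneg (le_of_lt hr) k) (by positivity))
      (Ioc_subset_Ioi_self.trans (Ioi_subset_Ioi hρ.le)).eventuallyLE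
  have := pow_mul_sq_norm_le_add_integral hg k hρ.le hρT.le
    (hG.mono_set ((Icc_subset_Ioi_iff hρT.le).2 hρ))
  rw [intervalIntegral.integral_const_mul] at this
  linarith

end OneDim

section Radial

variable {E : Type*} [NormedAddCommGroup E] [InnerProductSpace ℝ E]

theorem norm_fderiv_eq_of_norm_eq {F : Type*} [NormedAddCommGroup F] [NormedSpace ℝ F]
    {u : E → F} {v : ℝ → F} (huv : ∀ x, u x = v ‖x‖) (hu : Differentiable ℝ u) {x y : E}
    (h : ‖x‖ = ‖y‖) : ‖fderiv ℝ u x‖ = ‖fderiv ℝ u y‖ := by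
  set Q : E ≃ₗᵢ[ℝ] E := Submodule.reflection (Submodule.span ℝ {x - y})ᗮ
  have hQ : u ∘ Q = u := funext fun z => by simp [huv]
  have hQx : Q x = y := Submodule.reflection_sub h
  have hcomp := (hu (Q x)).hasFDerivAt.comp x Q.toContinuousLinearEquiv.hasFDerivAt
  rw [hQ] at hcomp
  rw [hcomp.fderiv, hQx]
  exact ContinuousLinearMap.opNorm_comp_linearIsometryEquiv _ Q

theorem norm_deriv_comp_smul_le {F : Type*} [NormedAddCommGroup F] [NormedSpace ℝ F]
    {u : E → F} {v : ℝ → F} (huv : ∀ x, u x = v ‖x‖) (hu : Differentiable ℝ u) {e : E}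
    (he : ‖e‖ = 1) (y : E) : ‖deriv (fun r : ℝ => u (r • e)) ‖y‖‖ ≤ ‖fderiv ℝ u y‖ := by
  have h : HasDerivAt (fun r : ℝ => u (r • e)) (fderiv ℝ u (‖y‖ • e) e) ‖y‖ := by
    have h := (hu _).hasFDerivAt.comp_hasDerivAt ‖y‖ ((hasDerivAt_id' ‖y‖).smul_const e)
    rw [one_smul] at h
    exact h
  rw [h.deriv, norm_fderiv_eq_of_norm_eq huv hu (x := y) (y := ‖y‖ • e)
    (by simp [norm_smul, he])]
  simpa [he] using (fderiv ℝ u (‖y‖ • e)).le_opNorm e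

variable [FiniteDimensional ℝ E] [Nontrivial E] [MeasurableSpace E] [BorelSpace E]
  (μ : Measure E) [μ.IsAddHaarMeasure]
  {F : Type*} [NormedAddCommGroup F] [InnerProductSpace ℝ F] [CompleteSpace F]
  {u : E → F} {v : ℝ → F}

theorem toSphere_mul_pow_mul_sq_enorm_le (huv : ∀ x, u x = v ‖x‖) (hu : Differentiable ℝ u)
    (hu2 : MemLp u 2 μ) (hdu2 : MemLp (fderiv ℝ u) 2 μ) {x : E} (hx : x ≠ 0) :
    μ.toSphere univ * ENNReal.ofReal (‖x‖ ^ (dim E - 1)) * ‖u x‖ₑ ^ 2 ≤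
      2 * eLpNorm (fderiv ℝ u) 2 μ * eLpNorm u 2 μ := by
  set ν := radialMeasure (dim E - 1)
  obtain ⟨e, he⟩ := exists_norm_eq E zero_le_one
  set g : ℝ → F := fun r => u (r • e)
  have hux : ∀ y, u y = g ‖y‖ := fun y => by simp [g, huv, norm_smul, he]
  have hg : Differentiable ℝ g := hu.comp (differentiable_id.smul_const e)
  set s := μ.toSphere univ ^ (1 / (2 : ℝ≥0∞)).toReal
  have hs : s * s = μ.toSphere univ := by
    rw [← ENNReal.rpow_add_of_nonneg _ _ (by positivity) (by positivity)]
    norm_num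
  have hs0 : s ≠ 0 := (ENNReal.rpow_pos (pos_iff_ne_zero.2
    (Measure.measure_univ_ne_zero.2 μ.toSphere_ne_zero)) (measure_ne_top _ _)).ne'
  have hnorm_u : eLpNorm u 2 μ = s * eLpNorm g 2 ν := by
    rw [← eLpNorm_comp_norm_addHaar μ hg.continuous.aestronglyMeasurable ENNReal.ofNat_ne_top]
    exact congrArg (eLpNorm · 2 μ) (funext hux)
  have hnorm_du : s * eLpNorm (deriv g) 2 ν ≤ eLpNorm (fderiv ℝ u) 2 μ := by
    rw [← eLpNorm_comp_norm_addHaar μ (aestronglyMeasurable_deriv g ν) ENNReal.ofNat_ne_top]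
    exact eLpNorm_mono (norm_deriv_comp_smul_le huv hu he)
  have hg2 : MemLp g 2 ν := ⟨hg.continuous.aestronglyMeasurable,
    ENNReal.lt_top_of_mul_ne_top_right (hnorm_u ▸ hu2.2.ne) hs0⟩
  have hg'2 : MemLp (deriv g) 2 ν := ⟨aestronglyMeasurable_deriv g ν,
    ENNReal.lt_top_of_mul_ne_top_right (hnorm_du.trans_lt hdu2.2).ne hs0⟩
  calc μ.toSphere univ * ENNReal.ofReal (‖x‖ ^ (dim E - 1)) * ‖u x‖ₑ ^ 2
      = s * s * ENNReal.ofReal (‖x‖ ^ (dim E - 1) * ‖g ‖x‖‖ ^ 2) := by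
        rw [hs, hux x, ← ofReal_norm, ← ENNReal.ofReal_pow (norm_nonneg _),
          mul_assoc, ← ENNReal.ofReal_mul (by positivity)]
    _ ≤ s * s * ENNReal.ofReal
          (2 * (eLpNorm g 2 ν).toReal * (eLpNorm (deriv g) 2 ν).toReal) :=
        mul_le_mul_right (ENNReal.ofReal_le_ofReal
          (pow_mul_sq_norm_le hg hg2 hg'2 (norm_pos_iff.2 hx))) _
    _ = 2 * (s * eLpNorm (deriv g) 2 ν) * (s * eLpNorm g 2 ν) := by
        rw [ENNReal.ofReal_mul (by positivity), ENNReal.ofReal_mul (by positivity),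
          ENNReal.ofReal_toReal hg2.2.ne, ENNReal.ofReal_toReal hg'2.2.ne, ENNReal.ofReal_ofNat]
        ring
    _ ≤ 2 * eLpNorm (fderiv ℝ u) 2 μ * eLpNorm u 2 μ := by
        rw [hnorm_u]
        gcongr

theorem eLpNorm_top_restrict_le_of_radial (huv : ∀ x, u x = v ‖x‖) (hu : Differentiable ℝ u)
    (hu2 : MemLp u 2 μ) (hdu2 : MemLp (fderiv ℝ u) 2 μ) {R : ℝ} (hR : 0 < R) :
    eLpNorm u ⊤ (μ.restrict {x | R ≤ ‖x‖}) ≤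
      ENNReal.ofReal (√(2 / (μ.toSphere univ).toReal) * R ^ (-(((dim E : ℝ) - 1) / 2))) *
        eLpNorm (fderiv ℝ u) 2 μ ^ (1 / 2 : ℝ) * eLpNorm u 2 μ ^ (1 / 2 : ℝ) := by
  set σ := μ.toSphere univ
  set M := ENNReal.ofReal (√(2 / σ.toReal) * R ^ (-(((dim E : ℝ) - 1) / 2)))
  set K := σ * ENNReal.ofReal (R ^ (dim E - 1))
  have hσ := toReal_toSphere_univ_pos μ
  have hσtop : σ ≠ ⊤ := measure_ne_top _ _
  have hMK : M ^ 2 * K = 2 := by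
    have hreal : (√(2 / σ.toReal) * R ^ (-(((dim E : ℝ) - 1) / 2))) ^ 2 *
        (σ.toReal * R ^ (dim E - 1)) = 2 := by
      have hk := rpow_neg_half_sq_mul_pow hR (dim E - 1)
      rw [Nat.cast_pred Module.finrank_pos] at hk
      rw [mul_pow, Real.sq_sqrt (by positivity), mul_mul_mul_comm, div_mul_cancel₀ _ hσ.ne', hk,
        mul_one]
    rw [show K = ENNReal.ofReal (σ.toReal * R ^ (dim E - 1)) by
        rw [ENNReal.ofReal_mul hσ.le, ENNReal.ofReal_toReal hσtop],
      ← ENNReal.ofReal_pow (by positivity), ← ENNReal.ofReal_mul (by positivity), hreal,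
      ENNReal.ofReal_ofNat]
  have hK0 : K ≠ 0 := fun hK => by simp [hK] at hMK
  have hKtop : K ≠ ⊤ := ENNReal.mul_ne_top hσtop ENNReal.ofReal_ne_top
  rw [eLpNorm_exponent_top]
  refine eLpNormEssSup_le_of_ae_enorm_bound (ae_restrict_of_forall_mem
    (isClosed_le continuous_const continuous_norm).measurableSet fun x (hx : R ≤ ‖x‖) => ?_)
  refine le_mul_rpow_half_mul_rpow_half_of_sq_le ((ENNReal.mul_le_mul_iff_left hK0 hKtop).1 ?_)
  calc ‖u x‖ₑ ^ 2 * K = σ * ENNReal.ofReal (R ^ (dim E - 1)) * ‖u x‖ₑ ^ 2 := mul_comm _ _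
    _ ≤ σ * ENNReal.ofReal (‖x‖ ^ (dim E - 1)) * ‖u x‖ₑ ^ 2 := by gcongr
    _ ≤ 2 * eLpNorm (fderiv ℝ u) 2 μ * eLpNorm u 2 μ :=
        toSphere_mul_pow_mul_sq_enorm_le μ huv hu hu2 hdu2 (norm_pos_iff.1 (hR.trans_le hx))
    _ = M ^ 2 * K * eLpNorm (fderiv ℝ u) 2 μ * eLpNorm u 2 μ := by rw [hMK]
    _ = M ^ 2 * eLpNorm (fderiv ℝ u) 2 μ * eLpNorm u 2 μ * K := by ring

end Radial

open MeasureTheory in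
theorem radial_strauss_inequality (n : ℕ) (hn : 2 ≤ n) :
    ∃ C > 0, ∀ (u : EuclideanSpace ℝ (Fin n) → ℂ) (v : ℝ → ℂ),
      (∀ x, u x = v ‖x‖) →
      Differentiable ℝ u →
      MemLp u 2 (volume : Measure (EuclideanSpace ℝ (Fin n))) →
      MemLp (fun x => fderiv ℝ u x) 2 (volume : Measure (EuclideanSpace ℝ (Fin n))) →
      ∀ R : ℝ, 0 < R →
        eLpNorm u ⊤ ((volume : Measure (EuclideanSpace ℝ (Fin n))).restrict {x | R ≤ ‖x‖}) ≤
          ENNReal.ofReal (C * R ^ (-(((n : ℝ) - 1) / 2))) *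
            (eLpNorm (fun x => fderiv ℝ u x) 2
                (volume : Measure (EuclideanSpace ℝ (Fin n)))) ^ ((1 : ℝ) / 2) *
            (eLpNorm u 2 (volume : Measure (EuclideanSpace ℝ (Fin n)))) ^ ((1 : ℝ) / 2) := by
  have : Nonempty (Fin n) := ⟨⟨0, by omega⟩⟩
  have hσ := toReal_toSphere_univ_pos (volume : Measure (EuclideanSpace ℝ (Fin n)))
  refine ⟨_, Real.sqrt_pos.2 (div_pos two_pos hσ), fun u v huv hu hu2 hdu2 R hR => ?_⟩
  simpa [finrank_euclideanSpace_fin] using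
    eLpNorm_top_restrict_le_of_radial volume huv hu hu2 hdu2 hR
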